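/- For every T > 0: δ(T) = 2·E_{ν_T}[ ε̄/(k_B T) ], and the function T ↦ T·δ(T) is differentiable at T with derivative D(T) = 2·Var_{ν_T}[ ε̄/(k_B T) ] = (2/(k_B T)²) · ( ∫_𝓔 ε̄² dν_T − ( ∫_𝓔 ε̄ dν_T )² ), where E_{ν_T} and Var_{ν_T} denote expectation and variance with respect to the probability measure ν_T. -/

import Mathlib

open MeasureTheory Real

noncomputable section

variable {𝓔 : Type*} [MeasurableSpace 𝓔]

/-- The (thermodynamic) number of internal degrees of freedom
`δ(T) = (2/(k_B T)) ⬝ (∫ ε̄ e^{-ε̄/(k_B T)} dμ) / (∫ e^{-ε̄/(k_B T)} dμ)`, `ε̄ = ε - ε0`. -/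
def deltaFun (μ : Measure 𝓔) (ε : 𝓔 → ℝ) (ε0 : ℝ) (kB T : ℝ) : ℝ :=
  (2 / (kB * T)) *
    ((∫ ζ, (ε ζ - ε0) * Real.exp (-(ε ζ - ε0) / (kB * T)) ∂μ) /
      (∫ ζ, Real.exp (-(ε ζ - ε0) / (kB * T)) ∂μ))

/-- The Gibbs probability measure `ν_T`, with density `Z(1/(k_B T))⁻¹ e^{-ε̄/(k_B T)}`
with respect to `μ`. -/
def gibbs (μ : Measure 𝓔) (ε : 𝓔 → ℝ) (ε0 : ℝ) (kB T : ℝ) : Measure 𝓔 :=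
  μ.withDensity fun ζ => ENNReal.ofReal
    ((∫ ζ', Real.exp (-(ε ζ' - ε0) / (kB * T)) ∂μ)⁻¹ * Real.exp (-(ε ζ - ε0) / (kB * T)))

/-!
The Gibbs measure `ν_T` is the exponential tilting of `μ` by `t ε̄` with `t = -1/(k_B T) < 0`, and
`T δ(T) = (2/k_B) ∫ ε̄ dν_T`. Since `∫ e^{t ε̄} dμ < ∞` for all `t < 0`, the cumulant generating
function `K(t) = log ∫ e^{t ε̄} dμ` is analytic there; the mean of `ε̄` under the tilted measure is
`K'(t)` and its variance is `K''(t)`. The chain rule along `T ↦ -1/(k_B T)`, whose derivative is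
`k_B/(k_B T)²`, then gives `D(T) = 2 Var_{ν_T}[ε̄]/(k_B T)² = 2 Var_{ν_T}[ε̄/(k_B T)]`.
-/

namespace ProbabilityTheory

variable {Ω : Type*} [MeasurableSpace Ω] {μ : Measure Ω} {X : Ω → ℝ}

lemma Iio_zero_subset_interior_integrableExpSet
    (hX : ∀ β : ℝ, 0 < β → Integrable (fun ω => exp (-β * X ω)) μ) :
    Set.Iio 0 ⊆ interior (integrableExpSet X μ) :=
  interior_maximal (fun t ht => by simpa [integrableExpSet] using hX (-t) (neg_pos.2 ht)) isOpen_Iio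

lemma hasDerivAt_deriv_cgf {t : ℝ} (ht : t ∈ interior (integrableExpSet X μ)) :
    HasDerivAt (deriv (cgf X μ)) (variance X (μ.tilted (t * X ·))) t := by
  rw [variance_tilted_mul ht, iteratedDeriv_succ, iteratedDeriv_one]
  exact (analyticAt_cgf ht).deriv.differentiableAt.hasDerivAt

end ProbabilityTheory

open ProbabilityTheory
open scoped NNReal Topology

section Gibbs

variable (μ : Measure 𝓔) (ε : 𝓔 → ℝ) (ε0 kB : ℝ)

lemma gibbs_eq_tilted (T : ℝ) :
    gibbs μ ε ε0 kB T = μ.tilted (fun ζ => -(kB * T)⁻¹ * (ε ζ - ε0)) := by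
  have hexp : ∀ ζ, -(ε ζ - ε0) / (kB * T) = -(kB * T)⁻¹ * (ε ζ - ε0) := fun ζ => by ring
  simp only [gibbs, Measure.tilted, hexp, inv_mul_eq_div]

lemma deltaFun_eq_integral_gibbs (T : ℝ) :
    deltaFun μ ε ε0 kB T = 2 / (kB * T) * ∫ ζ, ε ζ - ε0 ∂gibbs μ ε ε0 kB T := by
  have hexp : ∀ ζ, -(ε ζ - ε0) / (kB * T) = -(kB * T)⁻¹ * (ε ζ - ε0) := fun ζ => by ring
  rw [gibbs_eq_tilted, integral_tilted_mul_eq_mgf]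
  simp only [deltaFun, hexp, mgf, smul_eq_mul, div_mul_eq_mul_div, integral_div, mul_comm (rexp _)]

lemma isProbabilityMeasure_gibbs [NeZero μ] {T : ℝ} (hkT : 0 < kB * T)
    (hZ : ∀ β : ℝ, 0 < β → Integrable (fun ζ => exp (-β * (ε ζ - ε0))) μ) :
    IsProbabilityMeasure (gibbs μ ε ε0 kB T) := by
  rw [gibbs_eq_tilted]
  exact isProbabilityMeasure_tilted (hZ _ (inv_pos.2 hkT))

lemma memLp_gibbs {T : ℝ} (hkT : 0 < kB * T)
    (hZ : ∀ β : ℝ, 0 < β → Integrable (fun ζ => exp (-β * (ε ζ - ε0))) μ) (p : ℝ≥0) :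
    MemLp (fun ζ => ε ζ - ε0) p (gibbs μ ε ε0 kB T) := by
  rw [gibbs_eq_tilted]
  exact memLp_tilted_mul (Iio_zero_subset_interior_integrableExpSet hZ
    (neg_neg_of_pos (inv_pos.2 hkT))) p

lemma hasDerivAt_mul_deltaFun (hkB : 0 < kB) {T : ℝ} (hT : 0 < T)
    (hZ : ∀ β : ℝ, 0 < β → Integrable (fun ζ => exp (-β * (ε ζ - ε0))) μ) :
    HasDerivAt (fun s => s * deltaFun μ ε ε0 kB s)
      (2 / (kB * T) ^ 2 * variance (fun ζ => ε ζ - ε0) (gibbs μ ε ε0 kB T)) T := by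
  have hmem : ∀ s, 0 < s →
      -(kB * s)⁻¹ ∈ interior (integrableExpSet (fun ζ => ε ζ - ε0) μ) := fun s hs =>
    Iio_zero_subset_interior_integrableExpSet hZ (neg_neg_of_pos (inv_pos.2 (mul_pos hkB hs)))
  have hβ : HasDerivAt (fun s => -(kB * s)⁻¹) (kB / (kB * T) ^ 2) T := by
    simpa [neg_div] using (((hasDerivAt_id' T).const_mul kB).fun_inv (mul_pos hkB hT).ne').fun_neg
  have hmean : (fun s => s * deltaFun μ ε ε0 kB s) =ᶠ[𝓝 T]
      fun s => 2 / kB * deriv (cgf (fun ζ => ε ζ - ε0) μ) (-(kB * s)⁻¹) := by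
    filter_upwards [eventually_gt_nhds hT] with s hs
    rw [deltaFun_eq_integral_gibbs, gibbs_eq_tilted, integral_tilted_mul_self (hmem s hs)]
    field_simp
  rw [gibbs_eq_tilted]
  refine ((((hasDerivAt_deriv_cgf (hmem T hT)).comp T hβ).const_mul (2 / kB)).congr_of_eventuallyEq
    hmean).congr_deriv ?_
  field_simp

end Gibbs

theorem delta_eq_expectation_and_D_eq_variance_general
    (μ : Measure 𝓔) (hμ : μ Set.univ ≠ 0)
    (kB : ℝ) (hkB : 0 < kB)
    (ε : 𝓔 → ℝ) (ε0 : ℝ)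
    (hZ : ∀ β : ℝ, 0 < β → Integrable (fun ζ => Real.exp (-β * (ε ζ - ε0))) μ)
    (T : ℝ) (hT : 0 < T) :
    deltaFun μ ε ε0 kB T = 2 * ∫ ζ, (ε ζ - ε0) / (kB * T) ∂(gibbs μ ε ε0 kB T) ∧
    HasDerivAt (fun s => s * deltaFun μ ε ε0 kB s)
      (2 * ProbabilityTheory.variance (fun ζ => (ε ζ - ε0) / (kB * T)) (gibbs μ ε ε0 kB T))
      T ∧
    2 * ProbabilityTheory.variance (fun ζ => (ε ζ - ε0) / (kB * T)) (gibbs μ ε ε0 kB T)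
      = (2 / (kB * T) ^ 2) *
        ((∫ ζ, (ε ζ - ε0) ^ 2 ∂(gibbs μ ε ε0 kB T)) -
          (∫ ζ, (ε ζ - ε0) ∂(gibbs μ ε ε0 kB T)) ^ 2) := by
  have hkT : 0 < kB * T := mul_pos hkB hT
  have : NeZero μ := ⟨by simpa using hμ⟩
  have := isProbabilityMeasure_gibbs μ ε ε0 kB hkT hZ
  have hvar : 2 * variance (fun ζ => (ε ζ - ε0) / (kB * T)) (gibbs μ ε ε0 kB T)
      = 2 / (kB * T) ^ 2 * variance (fun ζ => ε ζ - ε0) (gibbs μ ε ε0 kB T) := by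
    simp only [div_eq_mul_inv, variance_mul_const, inv_pow]
    ring
  refine ⟨?_, ?_, ?_⟩
  · rw [deltaFun_eq_integral_gibbs, integral_div]
    ring
  · rw [hvar]
    exact hasDerivAt_mul_deltaFun μ ε ε0 kB hkB hT hZ
  · rw [hvar, variance_eq_sub (memLp_gibbs μ ε ε0 kB hkT hZ 2)]
    rfl

/-- **Proposition (probabilistic interpretation of δ and D).**
`δ(T) = 2 E_{ν_T}[ε̄/(k_B T)]`, and `T ↦ T δ(T)` is differentiable with derivative
`D(T) = 2 Var_{ν_T}[ε̄/(k_B T)] = (2/(k_B T)²)(∫ ε̄² dν_T − (∫ ε̄ dν_T)²)`. -/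
theorem delta_eq_expectation_and_D_eq_variance
    (μ : Measure 𝓔) (hμ : μ Set.univ ≠ 0)
    (kB : ℝ) (hkB : 0 < kB)
    (ε : 𝓔 → ℝ) (hε : Measurable ε) (ε0 : ℝ)
    (hlow : ∀ᵐ ζ ∂μ, ε0 ≤ ε ζ)
    (hsup : ∀ R : ℝ, (∀ᵐ ζ ∂μ, R ≤ ε ζ) → R ≤ ε0)
    (hZ : ∀ β : ℝ, 0 < β → Integrable (fun ζ => Real.exp (-β * (ε ζ - ε0))) μ)
    (T : ℝ) (hT : 0 < T) :
    deltaFun μ ε ε0 kB T = 2 * ∫ ζ, (ε ζ - ε0) / (kB * T) ∂(gibbs μ ε ε0 kB T) ∧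
    HasDerivAt (fun s => s * deltaFun μ ε ε0 kB s)
      (2 * ProbabilityTheory.variance (fun ζ => (ε ζ - ε0) / (kB * T)) (gibbs μ ε ε0 kB T))
      T ∧
    2 * ProbabilityTheory.variance (fun ζ => (ε ζ - ε0) / (kB * T)) (gibbs μ ε ε0 kB T)
      = (2 / (kB * T) ^ 2) *
        ((∫ ζ, (ε ζ - ε0) ^ 2 ∂(gibbs μ ε ε0 kB T)) -
          (∫ ζ, (ε ζ - ε0) ∂(gibbs μ ε ε0 kB T)) ^ 2) :=
  delta_eq_expectation_and_D_eq_variance_general μ hμ kB hkB ε ε0 hZ T hT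

end
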